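/- Let X be a real Banach space, A : X → ℝ and write, for U, Ũ ∈ X with e = U − Ũ, the function g(s) = A(Ũ + s·e). If A is three times continuously Fréchet differentiable, then A(U) − A(Ũ) = (1/2)(A'(Ũ)(e) + A'(U)(e)) + (1/2)∫₀¹ A'''(Ũ + s e)(e, e, e) · s(s−1) ds. -/

import Mathlib

/-!
Along the segment `s ↦ Ũ + s • e`, the `k`-th derivative of `g s = A (Ũ + s • e)` is
`A⁽ᵏ⁾ (Ũ + s • e) (e, …, e)`. For any `C³` function `g`, the auxiliary function
`2 g s - (2 s - a - b) g' s + (s - a) (s - b) g'' s` has derivative `(s - a) (s - b) g''' s`,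
so the fundamental theorem of calculus gives the trapezoidal rule for `∫ₐᵇ g'` with its
Peano-kernel remainder.
-/

open intervalIntegral

theorem hasDerivAt_iteratedFDeriv_add_smul {𝕜 E F : Type*} [NontriviallyNormedField 𝕜]
    [NormedAddCommGroup E] [NormedSpace 𝕜 E] [NormedAddCommGroup F] [NormedSpace 𝕜 F]
    {f : E → F} {n : WithTop ℕ∞} {k : ℕ} (hf : ContDiff 𝕜 n f) (hk : k < n)
    (x v : E) (w : Fin k → E) (t : 𝕜) :
    HasDerivAt (fun s : 𝕜 => iteratedFDeriv 𝕜 k f (x + s • v) w)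
      (iteratedFDeriv 𝕜 (k + 1) f (x + t • v) (Fin.cons v w)) t := by
  have hline : HasDerivAt (fun s : 𝕜 => x + s • v) v t := by
    simpa using ((hasDerivAt_id t).smul_const v).const_add x
  have hD : HasDerivAt (fun s : 𝕜 => iteratedFDeriv 𝕜 k f (x + s • v))
      (fderiv 𝕜 (iteratedFDeriv 𝕜 k f) (x + t • v) v) t :=
    ((hf.differentiable_iteratedFDeriv hk) _).hasFDerivAt.comp_hasDerivAt t hline
  rw [iteratedFDeriv_succ_apply_left]
  exact (ContinuousMultilinearMap.apply 𝕜 (fun _ : Fin k => E) F w).hasFDerivAt.comp_hasDerivAt t hD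

theorem sub_eq_trapezoid_add_integral {g g₁ g₂ g₃ : ℝ → ℝ} {a b : ℝ}
    (hg : ∀ s ∈ Set.uIcc a b, HasDerivAt g (g₁ s) s)
    (hg₁ : ∀ s ∈ Set.uIcc a b, HasDerivAt g₁ (g₂ s) s)
    (hg₂ : ∀ s ∈ Set.uIcc a b, HasDerivAt g₂ (g₃ s) s)
    (hg₃ : IntervalIntegrable g₃ MeasureTheory.volume a b) :
    g b - g a = (b - a) / 2 * (g₁ a + g₁ b)
      + (1 / 2) * ∫ s in a..b, g₃ s * ((s - a) * (s - b)) := by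
  set F : ℝ → ℝ := fun s => 2 * g s - (2 * s - a - b) * g₁ s + (s - a) * (s - b) * g₂ s
  have hF : ∀ s ∈ Set.uIcc a b, HasDerivAt F (g₃ s * ((s - a) * (s - b))) s := by
    intro s hs
    have hlin : HasDerivAt (fun s : ℝ => 2 * s - a - b) 2 s := by
      simpa using (((hasDerivAt_id s).const_mul 2).sub_const a).sub_const b
    have hquad : HasDerivAt (fun s : ℝ => (s - a) * (s - b)) (2 * s - a - b) s :=
      (((hasDerivAt_id s).sub_const a).mul ((hasDerivAt_id s).sub_const b)).congr_deriv
        (by simp only [id]; ring)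
    exact ((((hg s hs).const_mul 2).sub (hlin.mul (hg₁ s hs))).add
      (hquad.mul (hg₂ s hs))).congr_deriv (by ring)
  have hint : IntervalIntegrable (fun s => g₃ s * ((s - a) * (s - b))) MeasureTheory.volume a b :=
    hg₃.mul_continuousOn (by fun_prop)
  rw [integral_eq_sub_of_hasDerivAt hF hint]
  ring

theorem dwr_error_representation_general
    {X : Type*} [NormedAddCommGroup X] [NormedSpace ℝ X]
    (A : X → ℝ) (hA : ContDiff ℝ 3 A) (U Ut : X) (e : X) (he : e = U - Ut) :
    A U - A Ut = (1/2) * (fderiv ℝ A Ut e + fderiv ℝ A U e)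
      + (1/2) * ∫ s in (0:ℝ)..1,
          (iteratedFDeriv ℝ 3 A (Ut + s • e) ![e, e, e]) * (s * (s - 1)) := by
  have hderiv {k : ℕ} (hk : k < 3) (w : Fin k → X) (s : ℝ) (_ : s ∈ Set.uIcc (0 : ℝ) 1) :=
    hasDerivAt_iteratedFDeriv_add_smul hA (by exact_mod_cast hk) Ut e w s
  have hcont : Continuous fun s : ℝ => iteratedFDeriv ℝ 3 A (Ut + s • e) ![e, e, e] := by
    have := hA.continuous_iteratedFDeriv (m := 3) le_rfl
    fun_prop
  have key := sub_eq_trapezoid_add_integral (hderiv (k := 0) (by norm_num) ![])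
    (hderiv (k := 1) (by norm_num) ![e]) (hderiv (k := 2) (by norm_num) ![e, e])
    (hcont.intervalIntegrable 0 1)
  simpa [iteratedFDeriv_zero_apply, iteratedFDeriv_one_apply, he] using key

theorem dwr_error_representation
    {X : Type*} [NormedAddCommGroup X] [NormedSpace ℝ X] [CompleteSpace X]
    (A : X → ℝ) (hA : ContDiff ℝ 3 A) (U Ut : X) (e : X) (he : e = U - Ut) :
    A U - A Ut = (1/2) * (fderiv ℝ A Ut e + fderiv ℝ A U e)
      + (1/2) * ∫ s in (0:ℝ)..1,
          (iteratedFDeriv ℝ 3 A (Ut + s • e) ![e, e, e]) * (s * (s - 1)) :=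
  dwr_error_representation_general A hA U Ut e he
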